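/- arXiv:math/0601328 — 2 statements merged into one kernel-verified Lean document; each statement's English description precedes it below -/
import Mathlib

section
/- Let M be a left divisibility monoid, a ∈ M with right normal form h_m ⋯ h_1, and y a hypercube. Define y_m = y, y_{i-1} = h(y_i h_i) and h'_i by y_i h_i = h'_i y_{i-1} for i = m, …, 1. Then the right normal form of ya is h'_m ⋯ h'_1 · y_0 (dropping h'_m if trivial), and in particular each h'_i and y_0 are hypercubes. -/
section Defs
variable {M : Type*} [Monoid M]

/-- `a` left-divides `b` (`b` is a right multiple of `a`). -/
def LDvd (a b : M) : Prop := ∃ d, b = a * d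

/-- `a` right-divides `b` (`b` is a left multiple of `a`). -/
def RDvd (a b : M) : Prop := ∃ d, b = d * a

/-- `a` is an irreducible element of the monoid. -/
def IsIrred (a : M) : Prop := a ≠ 1 ∧ ∀ b c, a = b * c → b = 1 ∨ c = 1

/-- `c` is a right lcm of `a` and `b`. -/
def IsRightLcm (a b c : M) : Prop :=
  LDvd a c ∧ LDvd b c ∧ ∀ m, LDvd a m → LDvd b m → LDvd c m

/-- `c` is a right lcm of the set `s`. -/
def IsRightLcmSet (s : Set M) (c : M) : Prop :=
  (∀ x ∈ s, LDvd x c) ∧ ∀ m, (∀ x ∈ s, LDvd x m) → LDvd c m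

/-- A hypercube: a right lcm of a finite set of irreducible elements. -/
def IsHypercube (h : M) : Prop :=
  ∃ s : Finset M, (∀ x ∈ s, IsIrred x) ∧ IsRightLcmSet (↑s) h

/-- `h` is the maximal hypercube right-dividing `a`. -/
def IsMaxHC (a h : M) : Prop :=
  IsHypercube h ∧ RDvd h a ∧ ∀ k, IsHypercube k → RDvd k a → RDvd k h

/-- The list `L = [h_p, …, h_1]` of nontrivial hypercubes is a right normal form:
`h_i` is the maximal hypercube right-dividing `h_p ⋯ h_i`. -/
def IsRNF (hmap : M → M) (L : List M) : Prop :=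
  (∀ x ∈ L, IsHypercube x ∧ x ≠ 1) ∧
  ∀ n (hn : n < L.length), hmap ((L.take (n + 1)).prod) = L.get ⟨n, hn⟩

end Defs

/-- A left divisibility monoid: cancellative, generated by its finitely many
irreducibles, any two elements have a left gcd, and every set of left divisors
is a finite distributive lattice under left divisibility. -/
def IsLDM (M : Type*) [Monoid M] : Prop :=
  (∀ a b c : M, a * b = a * c → b = c) ∧
  (∀ a b c : M, b * a = c * a → b = c) ∧
  (∃ S : Finset M, (∀ x ∈ S, IsIrred x) ∧ Submonoid.closure (S : Set M) = ⊤) ∧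
  (∀ a b : M, ∃ g, LDvd g a ∧ LDvd g b ∧ ∀ c, LDvd c a → LDvd c b → LDvd c g) ∧
  (∀ a : M, {b : M | LDvd b a}.Finite) ∧
  (∀ a : M, ∃ i : DistribLattice {b : M // LDvd b a},
      ∀ x y : {b : M // LDvd b a}, i.le x y ↔ LDvd x.1 y.1)

/-!
Each `h'_i` left-divides the hypercube `y_i`, hence is a hypercube, and the products telescope to
`y a`. The heart of the matter is `h(h'_{i+1} h'_i) = h'_i`. Write `G = h'_{i+1} h'_i = x · h(G)`.
Since `u ↦ u / h(u)` is monotone for left divisibility, `x` left-divides `h'_{i+1}`. Conversely,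
distributivity of the divisor lattices shows that `y_{i+1} h_{i+1}` is the right lcm of `y_{i+1}`
and `G`, and that it is obtained from `x` by a hypercube; as `h'_{i+1}` is the least such left
factor, `h'_{i+1}` left-divides `x`. Finally `h'_i ≠ 1` for `i < m` (and `y_0 ≠ 1` for `m > 0`),
because two consecutive factors `h_{i+1} h_i` of a normal form never multiply to a hypercube.
-/

section Divisibility

variable {M : Type*} [Monoid M]

theorem ldvd_refl (a : M) : LDvd a a := ⟨1, (mul_one a).symm⟩

theorem ldvd_mul_right (a b : M) : LDvd a (a * b) := ⟨b, rfl⟩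

theorem one_ldvd (a : M) : LDvd 1 a := ⟨a, (one_mul a).symm⟩

theorem LDvd.trans {a b c : M} : LDvd a b → LDvd b c → LDvd a c
  | ⟨d, hd⟩, ⟨e, he⟩ => ⟨d * e, by rw [he, hd, mul_assoc]⟩

theorem LDvd.mul_left {a b : M} (h : LDvd a b) (c : M) : LDvd (c * a) (c * b) :=
  let ⟨d, hd⟩ := h
  ⟨d, by rw [hd, mul_assoc]⟩

theorem rdvd_refl (a : M) : RDvd a a := ⟨1, (one_mul a).symm⟩

theorem rdvd_mul_left (a b : M) : RDvd a (b * a) := ⟨b, rfl⟩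

theorem RDvd.trans {a b c : M} : RDvd a b → RDvd b c → RDvd a c
  | ⟨d, hd⟩, ⟨e, he⟩ => ⟨e * d, by rw [he, hd, mul_assoc]⟩

theorem isRightLcm_of_ldvd {a b : M} (h : LDvd a b) : IsRightLcm a b b :=
  ⟨h, ldvd_refl b, fun _ _ hb => hb⟩

theorem isRightLcm_rlcm_rlcm {x a b c j₁ j₂ j : M} (hc : IsRightLcm a b c)
    (h₁ : IsRightLcm x a j₁) (h₂ : IsRightLcm x b j₂) (hj : IsRightLcm x c j) :
    IsRightLcm j₁ j₂ j :=
  ⟨h₁.2.2 j hj.1 (hc.1.trans hj.2.1), h₂.2.2 j hj.1 (hc.2.1.trans hj.2.1),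
    fun m hm₁ hm₂ => hj.2.2 m (h₁.1.trans hm₁)
      (hc.2.2 m (h₁.2.1.trans hm₁) (h₂.2.1.trans hm₂))⟩

theorem IsRightLcmSet.union {s₁ s₂ : Set M} {k₁ k₂ j : M} (h₁ : IsRightLcmSet s₁ k₁)
    (h₂ : IsRightLcmSet s₂ k₂) (hj : IsRightLcm k₁ k₂ j) :
    IsRightLcmSet (s₁ ∪ s₂) j := by
  refine ⟨?_, fun m hm => hj.2.2 m (h₁.2 m fun x hx => hm x (.inl hx))
    (h₂.2 m fun x hx => hm x (.inr hx))⟩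
  rintro x (hx | hx)
  · exact (h₁.1 x hx).trans hj.1
  · exact (h₂.1 x hx).trans hj.2.1

theorem isHypercube_one : IsHypercube (1 : M) :=
  ⟨∅, by simp, by simp, fun m _ => one_ldvd m⟩

theorem IsIrred.isHypercube {q : M} (hq : IsIrred q) : IsHypercube q :=
  ⟨{q}, by simpa using hq, by simpa using ldvd_refl q, fun m hm => hm q (by simp)⟩

theorem IsHypercube.rlcm {k₁ k₂ j : M} (h₁ : IsHypercube k₁) (h₂ : IsHypercube k₂)
    (hj : IsRightLcm k₁ k₂ j) : IsHypercube j := by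
  classical
  obtain ⟨S₁, hS₁, hk₁⟩ := h₁
  obtain ⟨S₂, hS₂, hk₂⟩ := h₂
  refine ⟨S₁ ∪ S₂, fun x hx => ?_, by simpa using hk₁.union hk₂ hj⟩
  rcases Finset.mem_union.1 hx with hx | hx
  exacts [hS₁ x hx, hS₂ x hx]

end Divisibility

section LDM

variable {M : Type*} [Monoid M]

theorem IsLDM.mul_left_cancel (hM : IsLDM M) {a b c : M} (h : a * b = a * c) : b = c := hM.1 a b c h

theorem IsLDM.mul_right_cancel (hM : IsLDM M) {a b c : M} (h : b * a = c * a) : b = c :=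
  hM.2.1 a b c h

theorem IsLDM.ldvd_antisymm (hM : IsLDM M) {a b : M} (h₁ : LDvd a b) (h₂ : LDvd b a) :
    a = b := by
  obtain ⟨_, hi⟩ := hM.2.2.2.2.2 b
  have hab : (⟨a, h₁⟩ : {x : M // LDvd x b}) ≤ ⟨b, ldvd_refl b⟩ := (hi _ _).2 h₁
  have hba : (⟨b, ldvd_refl b⟩ : {x : M // LDvd x b}) ≤ ⟨a, h₁⟩ := (hi _ _).2 h₂
  exact congrArg Subtype.val (le_antisymm hab hba)

theorem IsLDM.eq_one_of_mul_eq_one_left (hM : IsLDM M) {a b : M} (h : a * b = 1) : a = 1 :=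
  hM.ldvd_antisymm ⟨b, h.symm⟩ (one_ldvd a)

theorem IsLDM.eq_one_of_mul_eq_one_right (hM : IsLDM M) {a b : M} (h : a * b = 1) : b = 1 := by
  rwa [hM.eq_one_of_mul_eq_one_left h, one_mul] at h

theorem IsLDM.rdvd_antisymm (hM : IsLDM M) {a b : M} (h₁ : RDvd a b) (h₂ : RDvd b a) :
    a = b := by
  obtain ⟨d, rfl⟩ := h₁
  obtain ⟨e, he⟩ := h₂
  have hed : e * d = 1 := hM.mul_right_cancel (by rw [mul_assoc, ← he, one_mul])
  rw [hM.eq_one_of_mul_eq_one_right hed, one_mul]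

theorem IsRightLcm.unique (hM : IsLDM M) {a b j j' : M} (hj : IsRightLcm a b j)
    (hj' : IsRightLcm a b j') : j = j' :=
  hM.ldvd_antisymm (hj.2.2 j' hj'.1 hj'.2.1) (hj'.2.2 j hj.1 hj.2.1)

theorem IsRightLcm.of_mul_left (hM : IsLDM M) {x a b j : M} (hj : IsRightLcm (x * a) (x * b) j) :
    ∃ l, IsRightLcm a b l ∧ j = x * l := by
  obtain ⟨l, rfl⟩ := (ldvd_mul_right x a).trans hj.1
  have cancel : ∀ {c d : M}, LDvd (x * c) (x * d) → LDvd c d := fun ⟨e, he⟩ =>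
    ⟨e, hM.mul_left_cancel (by rw [he, mul_assoc])⟩
  exact ⟨l, ⟨cancel hj.1, cancel hj.2.1, fun m ha hb => cancel
    (hj.2.2 (x * m) (ha.mul_left x) (hb.mul_left x))⟩, rfl⟩

theorem IsLDM.isRightLcm_sup (hM : IsLDM M) {z : M} [DistribLattice {b : M // LDvd b z}]
    (hle : ∀ X Y : {b : M // LDvd b z}, X ≤ Y ↔ LDvd X.1 Y.1) (X Y : {b : M // LDvd b z}) :
    IsRightLcm X.1 Y.1 (X ⊔ Y).1 := by
  refine ⟨(hle _ _).1 le_sup_left, (hle _ _).1 le_sup_right, fun m hXm hYm => ?_⟩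
  -- `m` need not divide `z`: compare through the left gcd of `X ⊔ Y` and `m`
  obtain ⟨g, hg, hgm, hmax⟩ := hM.2.2.2.1 (X ⊔ Y).1 m
  have hgz : LDvd g z := hg.trans (X ⊔ Y).2
  have hle' : X ⊔ Y ≤ ⟨g, hgz⟩ :=
    sup_le ((hle _ _).2 (hmax _ ((hle _ _).1 le_sup_left) hXm))
    ((hle _ _).2 (hmax _ ((hle _ _).1 le_sup_right) hYm))
  exact ((hle _ _).1 hle').trans hgm

theorem IsLDM.exists_rlcm (hM : IsLDM M) {x y z : M} (hx : LDvd x z) (hy : LDvd y z) :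
    ∃ j, IsRightLcm x y j := by
  obtain ⟨_, hi⟩ := hM.2.2.2.2.2 z
  exact ⟨_, hM.isRightLcm_sup hi ⟨x, hx⟩ ⟨y, hy⟩⟩

theorem IsLDM.exists_rlcm_of_ldvd_rlcm (hM : IsLDM M) {a b j x : M} (hj : IsRightLcm a b j)
    (hx : LDvd x j) : ∃ a' b', LDvd a' a ∧ LDvd b' b ∧ IsRightLcm a' b' x := by
  obtain ⟨_, hi⟩ := hM.2.2.2.2.2 j
  let A : {c : M // LDvd c j} := ⟨a, hj.1⟩
  let B : {c : M // LDvd c j} := ⟨b, hj.2.1⟩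
  let X : {c : M // LDvd c j} := ⟨x, hx⟩
  have hAB : A ⊔ B = ⟨j, ldvd_refl j⟩ :=
    Subtype.ext ((hM.isRightLcm_sup hi A B).unique hM hj)
  have hX : X ⊓ A ⊔ X ⊓ B = X := by
    rw [← inf_sup_left, hAB, inf_eq_left.2 ((hi _ _).2 hx)]
  refine ⟨(X ⊓ A).1, (X ⊓ B).1, (hi _ _).1 inf_le_right, (hi _ _).1 inf_le_right, ?_⟩
  simpa only [hX] using hM.isRightLcm_sup hi (X ⊓ A) (X ⊓ B)

end LDM

section Hypercubes

variable {M : Type*} [Monoid M]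

theorem IsLDM.exists_rlcmSet (hM : IsLDM M) {z : M} (s : Finset M) (hs : ∀ q ∈ s, LDvd q z) :
    ∃ j, IsRightLcmSet (s : Set M) j := by
  classical
  induction s using Finset.induction_on with
  | empty => exact ⟨1, by simp, fun m _ => one_ldvd m⟩
  | @insert a s _ ih =>
    obtain ⟨j', hj'⟩ := ih fun q hq => hs q (Finset.mem_insert_of_mem hq)
    obtain ⟨j, hj⟩ := hM.exists_rlcm (hs a (Finset.mem_insert_self a s))
      (hj'.2 z fun q hq => hs q (Finset.mem_insert_of_mem hq))
    have ha : IsRightLcmSet ({a} : Set M) a :=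
      ⟨fun x hx => hx ▸ ldvd_refl a, fun m hm => hm a rfl⟩
    refine ⟨j, ?_⟩
    rw [Finset.coe_insert, Set.insert_eq]
    exact ha.union hj' hj

theorem IsHypercube.induction (hM : IsLDM M) {motive : M → Prop} (one : motive 1)
    (rlcm : ∀ k q j, IsHypercube k → IsIrred q → IsRightLcm k q j → motive k → motive j)
    {h : M} (hh : IsHypercube h) : motive h := by
  classical
  obtain ⟨S, hS, hh⟩ := hh
  induction S using Finset.induction_on generalizing h with
  | empty =>
    rwa [hM.ldvd_antisymm (hh.2 1 (by simp)) (one_ldvd h)]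
  | @insert q S _ ih =>
    have hSh : ∀ p ∈ S, LDvd p h := fun p hp => hh.1 p (by simp [hp])
    obtain ⟨k, hk⟩ := hM.exists_rlcmSet S hSh
    have hSirr : ∀ p ∈ S, IsIrred p := fun p hp => hS p (Finset.mem_insert_of_mem hp)
    refine rlcm k q h ⟨S, hSirr, hk⟩ (hS q (Finset.mem_insert_self q S))
      ⟨hk.2 h hSh, hh.1 q (by simp), fun m hkm hqm => hh.2 m ?_⟩ (ih hSirr hk)
    simp only [Finset.coe_insert, Set.forall_mem_insert]
    exact ⟨hqm, fun p hp => (hk.1 p hp).trans hkm⟩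

theorem IsHypercube.of_ldvd (hM : IsLDM M) {h x : M} (hh : IsHypercube h) (hx : LDvd x h) :
    IsHypercube x := by
  refine IsHypercube.induction hM (motive := fun h => ∀ x, LDvd x h → IsHypercube x)
    (fun x hx => ?_) (fun k q j _ hq hj ih x hx => ?_) hh x hx
  · rw [hM.ldvd_antisymm hx (one_ldvd x)]; exact isHypercube_one
  · -- distributivity: `x = lcm (gcd (x, k), gcd (x, q))`
    obtain ⟨a, b, hak, hbq, hx⟩ := hM.exists_rlcm_of_ldvd_rlcm hj hx
    obtain ⟨c, hc⟩ := hbq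
    have hb : IsHypercube b := by
      rcases hq.2 b c hc with rfl | rfl
      · exact isHypercube_one
      · rw [mul_one] at hc; exact hc ▸ hq.isHypercube
    exact (ih a hak).rlcm hb hx

theorem IsIrred.eq_or_eq_of_ldvd_rlcm (hM : IsLDM M) {q x j d : M} (hq : IsIrred q)
    (hj : IsRightLcm x q j) (hxd : LDvd x d) (hdj : LDvd d j) : d = x ∨ d = j := by
  obtain ⟨a, b, hax, ⟨c, hc⟩, hd⟩ := hM.exists_rlcm_of_ldvd_rlcm hj hdj
  rcases hq.2 b c hc with rfl | rfl
  · exact .inl (hM.ldvd_antisymm ((hd.2.2 a (ldvd_refl a) (one_ldvd a)).trans hax) hxd)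
  · rw [mul_one] at hc
    exact .inr (hM.ldvd_antisymm hdj (hj.2.2 d hxd (hc ▸ hd.2.1)))

theorem IsIrred.exists_rlcm_eq_mul (hM : IsLDM M) {q x j : M} (hq : IsIrred q)
    (hj : IsRightLcm x q j) : ∃ k, IsHypercube k ∧ j = x * k := by
  obtain ⟨w, rfl⟩ := hj.1
  refine ⟨w, ?_, rfl⟩
  by_cases hw : w = 1
  · exact hw ▸ isHypercube_one
  refine IsIrred.isHypercube ⟨hw, fun b c hbc => ?_⟩
  subst hbc
  rcases hq.eq_or_eq_of_ldvd_rlcm hM hj (ldvd_mul_right x b)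
    (by simpa only [mul_assoc] using ldvd_mul_right (x * b) c) with h | h
  · exact .inl (hM.mul_left_cancel (h.trans (mul_one x).symm))
  · exact .inr (hM.mul_left_cancel (a := x * b) (by rw [mul_one, mul_assoc, ← h]))

theorem IsHypercube.exists_rlcm_eq_mul (hM : IsLDM M) {s x j : M} (hs : IsHypercube s)
    (hj : IsRightLcm x s j) : ∃ k, IsHypercube k ∧ j = x * k := by
  refine IsHypercube.induction hM
    (motive := fun s => ∀ j, IsRightLcm x s j → ∃ k, IsHypercube k ∧ j = x * k)
    (fun j hj => ?_) (fun s' q s _ hq hs ih j hj => ?_) hs j hj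
  · refine ⟨1, isHypercube_one, ?_⟩
    rw [mul_one]
    exact hM.ldvd_antisymm (hj.2.2 x (ldvd_refl x) (one_ldvd x)) hj.1
  · obtain ⟨j₁, hj₁⟩ := hM.exists_rlcm hj.1 (hs.1.trans hj.2.1)
    obtain ⟨j₂, hj₂⟩ := hM.exists_rlcm hj.1 (hs.2.1.trans hj.2.1)
    obtain ⟨k₁, hk₁, rfl⟩ := ih _ hj₁
    obtain ⟨k₂, hk₂, rfl⟩ := hq.exists_rlcm_eq_mul hM hj₂
    obtain ⟨l, hl, rfl⟩ := (isRightLcm_rlcm_rlcm hs hj₁ hj₂ hj).of_mul_left hM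
    exact ⟨l, hk₁.rlcm hk₂ hl, rfl⟩

theorem IsHypercube.of_rdvd (hM : IsLDM M) {h w : M} (hh : IsHypercube h) (hw : RDvd w h) :
    IsHypercube w := by
  obtain ⟨x, rfl⟩ := hw
  obtain ⟨k, hk, hxk⟩ := hh.exists_rlcm_eq_mul hM (isRightLcm_of_ldvd (ldvd_mul_right x w))
  rwa [hM.mul_left_cancel hxk]

end Hypercubes

section MaxHypercube

variable {M : Type*} [Monoid M] {hmap : M → M}

theorem hmap_eq_self (hM : IsLDM M) (hspec : ∀ a, IsMaxHC a (hmap a)) {k : M}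
    (hk : IsHypercube k) : hmap k = k :=
  hM.rdvd_antisymm (hspec k).2.1 ((hspec k).2.2 k hk (rdvd_refl k))

theorem rdvd_hmap_mul (hspec : ∀ a, IsMaxHC a (hmap a)) {x : M} (hx : IsHypercube x) (a : M) :
    RDvd x (hmap (a * x)) :=
  (hspec _).2.2 x hx (rdvd_mul_left x a)

theorem ldvd_of_eq_mul_hmap (hM : IsLDM M) (hspec : ∀ a, IsMaxHC a (hmap a)) {u x₀ x k : M}
    (hu : u = x₀ * hmap u) (hk : IsHypercube k) (hx : u = x * k) : LDvd x₀ x := by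
  obtain ⟨w, hw⟩ := (hspec u).2.2 k hk ⟨x, hx⟩
  exact ⟨w, hM.mul_right_cancel (a := k) (by rw [← hx, hu, hw, mul_assoc])⟩

theorem hmap_mul_of_irred (hM : IsLDM M) (hspec : ∀ a, IsMaxHC a (hmap a)) (a : M) {q : M}
    (hq : IsIrred q) : hmap (a * q) = hmap (hmap a * q) := by
  obtain ⟨k, hk⟩ := rdvd_hmap_mul hspec hq.isHypercube a
  obtain ⟨x, hx⟩ := (hspec (a * q)).2.1
  have hka : RDvd k a := ⟨x, hM.mul_right_cancel (a := q) (by rw [mul_assoc, ← hk, ← hx])⟩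
  obtain ⟨e, he⟩ := (hspec a).2.2 k ((hspec _).1.of_ldvd hM ⟨q, hk⟩) hka
  obtain ⟨a₁, ha₁⟩ := (hspec a).2.1
  apply hM.rdvd_antisymm
  · exact (hspec _).2.2 _ (hspec _).1 ⟨e, by rw [he, hk, mul_assoc]⟩
  · exact (hspec _).2.2 _ (hspec _).1
      ((hspec _).2.1.trans ⟨a₁, by rw [← mul_assoc, ← ha₁]⟩)

theorem hmap_mul (hM : IsLDM M) (hspec : ∀ a, IsMaxHC a (hmap a)) (a b : M) :
    hmap (a * b) = hmap (hmap a * b) := by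
  obtain ⟨S, hS, hcl⟩ := hM.2.2.1
  refine Submonoid.induction_of_closure_eq_top_right hcl b
    (motive := fun b => ∀ a, hmap (a * b) = hmap (hmap a * b)) (fun a => ?_)
    (fun b q hq ih a => ?_) a
  · rw [mul_one, mul_one, hmap_eq_self hM hspec (hspec a).1]
  · rw [← mul_assoc, ← mul_assoc, hmap_mul_of_irred hM hspec _ (hS q hq), ih,
      ← hmap_mul_of_irred hM hspec _ (hS q hq)]

theorem ldvd_of_eq_mul_hmap_of_mul (hM : IsLDM M) (hspec : ∀ a, IsMaxHC a (hmap a))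
    {a c x y : M} (hx : a = x * hmap a) (hy : a * c = y * hmap (a * c)) : LDvd x y := by
  obtain ⟨z, hz⟩ := (hspec (hmap a * c)).2.1
  rw [← hmap_mul hM hspec] at hz
  exact ⟨z, hM.mul_right_cancel (a := hmap (a * c))
    (by rw [← hy, mul_assoc, ← hz, ← mul_assoc, ← hx])⟩

theorem isRightLcm_of_hmap_mul_eq (hM : IsLDM M) (hspec : ∀ a, IsMaxHC a (hmap a))
    {s t r G v : M} (hv : IsHypercube v) (hG : s * t * r = G * v) (htr : hmap (t * r) = r)
    (hGst : LDvd G (s * t)) : IsRightLcm s G (s * t) := by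
  obtain ⟨j, hj⟩ := hM.exists_rlcm (ldvd_mul_right s t) hGst
  obtain ⟨e, he⟩ := hj.2.2 _ (ldvd_mul_right s t) hGst
  obtain ⟨w, hw⟩ := hj.2.1
  obtain ⟨t', ht'⟩ := hj.1
  have hk : IsHypercube (e * r) := hv.of_rdvd hM
    ⟨w, hM.mul_left_cancel (a := G) (by rw [← hG, he, hw, mul_assoc, mul_assoc])⟩
  have htt' : LDvd t t' := ldvd_of_eq_mul_hmap hM hspec (u := t * r) (by rw [htr]) hk
    (hM.mul_left_cancel (a := s) (by rw [← mul_assoc, he, ht']; simp only [mul_assoc]))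
  rwa [hM.ldvd_antisymm ⟨e, he⟩ (ht' ▸ htt'.mul_left s)] at hj

/-- With `s = y_{i+1}`, `t = h_{i+1}`, `r = h_i`, this says that `h'_{i+1} h'_i` is in normal
form. -/
theorem hmap_mul_cofactors (hM : IsLDM M) (hspec : ∀ a, IsMaxHC a (hmap a))
    {s t r v g v' g' : M} (hs : IsHypercube s) (hr : IsHypercube r) (htr : hmap (t * r) = r)
    (hv : v = hmap (s * t)) (hg : s * t = g * v) (hv' : v' = hmap (v * r))
    (hg' : v * r = g' * v') : hmap (g * g') = g' := by
  obtain ⟨v₃, hv₃⟩ : RDvd r v' := hv' ▸ rdvd_hmap_mul hspec hr v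
  have hv₃' : v = g' * v₃ := hM.mul_right_cancel (a := r) (by rw [hg', hv₃, mul_assoc])
  have hst : s * t = g * g' * v₃ := by rw [hg, hv₃', mul_assoc]
  have hstr : s * t * r = g * g' * v' := by rw [hg, mul_assoc, hg', ← mul_assoc]
  obtain ⟨x, hx⟩ := (hspec (g * g')).2.1
  have hxg : LDvd x g :=
    ldvd_of_eq_mul_hmap_of_mul hM hspec hx (c := v₃) (by rw [← hst, ← hv]; exact hg)
  have hxst : LDvd x (s * t) := ⟨hmap (g * g') * v₃, by rw [hst, ← mul_assoc, ← hx]⟩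
  -- `s * t = lcm (s, g g') = lcm (lcm (x, s), x * hmap (g g'))`, and both have hypercube cofactors
  have hlcm := isRightLcm_of_hmap_mul_eq hM hspec (hv' ▸ (hspec _).1) hstr htr ⟨v₃, hst⟩
  rw [hx] at hlcm
  obtain ⟨j, hj⟩ := hM.exists_rlcm hxst (ldvd_mul_right s t)
  obtain ⟨k, hk, rfl⟩ := hs.exists_rlcm_eq_mul hM hj
  obtain ⟨l, hl, hstl⟩ := (isRightLcm_rlcm_rlcm hlcm hj
    (isRightLcm_of_ldvd (ldvd_mul_right x _)) (isRightLcm_of_ldvd hxst)).of_mul_left hM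
  have hgx : LDvd g x :=
    ldvd_of_eq_mul_hmap hM hspec (u := s * t) (hv ▸ hg) (hk.rlcm (hspec _).1 hl) hstl
  rw [hM.ldvd_antisymm hxg hgx] at hx
  exact (hM.mul_left_cancel hx).symm

end MaxHypercube

section NormalForm

variable {M : Type*} [Monoid M] {hmap : M → M}

theorem isRNF_iff (hM : IsLDM M) (hspec : ∀ a, IsMaxHC a (hmap a)) {L : List M} :
    IsRNF hmap L ↔
      (∀ x ∈ L, IsHypercube x ∧ x ≠ 1) ∧ L.IsChain (fun a b => hmap (a * b) = b) := by
  refine and_congr_right fun hL => ?_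
  have step : ∀ n (hn : n + 1 < L.length),
      hmap (L.take (n + 2)).prod = hmap (hmap (L.take (n + 1)).prod * L[n + 1]) :=
    fun n hn => by rw [List.prod_take_succ _ _ hn, hmap_mul hM hspec]
  simp only [List.get_eq_getElem, List.isChain_iff_getElem]
  constructor
  · intro h n hn
    rw [← h n (by omega), ← step n hn]
    exact h (n + 1) hn
  · intro h n hn
    induction n with
    | zero =>
      rw [List.prod_take_succ _ _ hn, List.take_zero, List.prod_nil, one_mul]
      exact hmap_eq_self hM hspec (hL _ (List.getElem_mem hn)).1
    | succ n ih => rw [step n hn, ih (by omega)]; exact h n hn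

theorem isRNF_filter_ne_one [DecidableEq M] (hM : IsLDM M) (hspec : ∀ a, IsMaxHC a (hmap a))
    {K : List M} (hK : ∀ x ∈ K, IsHypercube x) (hne : ∀ x ∈ K.tail, x ≠ 1)
    (hchain : K.IsChain (fun a b => hmap (a * b) = b)) :
    IsRNF hmap (K.filter fun x => decide (x ≠ 1)) ∧
      (K.filter fun x => decide (x ≠ 1)).prod = K.prod := by
  rcases K with _ | ⟨a, K⟩
  · exact ⟨(isRNF_iff hM hspec).2 (by simp), rfl⟩
  have hfilter : (K.filter fun x => decide (x ≠ 1)) = K :=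
    List.filter_eq_self.2 (by simpa using hne)
  have hKnf : IsRNF hmap K :=
    (isRNF_iff hM hspec).2 ⟨fun x hx => ⟨hK x (by simp [hx]), hne x hx⟩, hchain.tail⟩
  by_cases ha : a = 1
  · rw [List.filter_cons_of_neg (by simpa using ha), hfilter, List.prod_cons, ha, one_mul]
    exact ⟨hKnf, rfl⟩
  · rw [List.filter_cons_of_pos (by simpa using ha), hfilter]
    exact ⟨(isRNF_iff hM hspec).2 ⟨fun x hx => ⟨hK x hx, by
      rcases List.mem_cons.1 hx with rfl | hx
      exacts [ha, hne x hx]⟩, hchain⟩, rfl⟩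

theorem isHypercube_cofactor (hM : IsLDM M) (hspec : ∀ a, IsMaxHC a (hmap a)) {y x g : M}
    (hy : IsHypercube y) (hx : IsHypercube x) (hg : y * x = g * hmap (y * x)) :
    IsHypercube g := by
  obtain ⟨w, hw⟩ := rdvd_hmap_mul hspec hx y
  exact hy.of_ldvd hM ⟨w, hM.mul_right_cancel (a := x) (by rw [hg, hw, mul_assoc])⟩

theorem hmap_mul_ne_one (hM : IsLDM M) (hspec : ∀ a, IsMaxHC a (hmap a)) {x : M}
    (hx : IsHypercube x) (hx1 : x ≠ 1) (a : M) : hmap (a * x) ≠ 1 := fun h => by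
  obtain ⟨w, hw⟩ := rdvd_hmap_mul hspec hx a
  rw [h] at hw
  exact hx1 (hM.eq_one_of_mul_eq_one_right hw.symm)

theorem cofactor_ne_one (hM : IsLDM M) (hspec : ∀ a, IsMaxHC a (hmap a)) {y x x' v v' g' : M}
    (hx : IsHypercube x) (hx1 : x ≠ 1) (hxx' : hmap (x * x') = x') (hv : v = hmap (y * x))
    (hv' : v' = hmap (v * x')) (hg' : v * x' = g' * v') : g' ≠ 1 := by
  rintro rfl
  obtain ⟨e, he⟩ := rdvd_hmap_mul hspec hx y
  have hxx'_hc : IsHypercube (x * x') := (hv' ▸ (hspec _).1 : IsHypercube v').of_rdvd hM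
    ⟨e, by rw [← one_mul v', ← hg', hv, he, mul_assoc]⟩
  rw [hmap_eq_self hM hspec hxx'_hc] at hxx'
  exact hx1 (hM.mul_right_cancel (a := x') (by rw [hxx', one_mul]))

end NormalForm

section DescList

variable {M : Type*}

def descList (f : ℕ → M) (e : M) (n : ℕ) : List M :=
  List.ofFn (fun j : Fin n => f (n - j)) ++ [e]

theorem descList_zero (f : ℕ → M) (e : M) : descList f e 0 = [e] := by simp [descList]

theorem descList_succ (f : ℕ → M) (e : M) (n : ℕ) :
    descList f e (n + 1) = f (n + 1) :: descList f e n := by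
  simp [descList, List.ofFn_succ]

theorem mem_descList (f : ℕ → M) (e : M) {n i : ℕ} (h1 : 1 ≤ i) (h2 : i ≤ n) :
    f i ∈ descList f e n :=
  List.mem_append_left _
    (List.mem_ofFn.2 ⟨⟨n - i, by omega⟩, by simp [Nat.sub_sub_self h2]⟩)

theorem self_mem_descList (f : ℕ → M) (e : M) (n : ℕ) : e ∈ descList f e n :=
  List.mem_append_right _ (List.mem_singleton_self e)

end DescList

section DescListNormalForm

variable {M : Type*} [Monoid M]

/-- `L = [h_m, …, h_1]`, so `h_i = L[m - i]`, and `Y i = y_i`, `H' i = h'_i`. -/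
def IsCarrySeq (hmap : M → M) (L : List M) (Y H' : ℕ → M) : Prop :=
  ∀ i (h1 : 1 ≤ i) (h2 : i ≤ L.length),
    Y (i - 1) = hmap (Y i * L[L.length - i]'(Nat.sub_lt (Nat.lt_of_lt_of_le h1 h2) h1)) ∧
      Y i * L[L.length - i]'(Nat.sub_lt (Nat.lt_of_lt_of_le h1 h2) h1) = H' i * Y (i - 1)

variable {hmap : M → M}

theorem head_descList (hM : IsLDM M) (hspec : ∀ a, IsMaxHC a (hmap a)) (Y H' : ℕ → M)
    {x : M} {L : List M} (hx : IsHypercube x ∧ x ≠ 1) (hL : ∀ x ∈ L, IsHypercube x)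
    (hchain : (x :: L).IsChain (fun a b => hmap (a * b) = b))
    (hY : IsHypercube (Y (L.length + 1))) (hYn : Y L.length = hmap (Y (L.length + 1) * x))
    (hH : Y (L.length + 1) * x = H' (L.length + 1) * Y L.length)
    (hrec : IsCarrySeq hmap L Y H') :
    ∀ b ∈ (descList H' (Y 0) L.length).head?, b ≠ 1 ∧ hmap (H' (L.length + 1) * b) = b := by
  rcases L with _ | ⟨x', L⟩
  · simp only [List.length_nil, zero_add, descList_zero, List.head?_cons, Option.mem_def,
      Option.some.injEq, forall_eq'] at hYn hH ⊢
    exact ⟨hYn ▸ hmap_mul_ne_one hM hspec hx.1 hx.2 _, by rw [← hH, ← hYn]⟩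
  · obtain ⟨hYm, hH'⟩ : Y L.length = hmap (Y (L.length + 1) * x') ∧
        Y (L.length + 1) * x' = H' (L.length + 1) * Y L.length := by
      simpa using hrec (L.length + 1) (by omega) (by simp)
    have hxx' : hmap (x * x') = x' := (List.isChain_cons_cons.1 hchain).1
    simp only [List.length_cons, descList_succ, List.head?_cons, Option.mem_def,
      Option.some.injEq, forall_eq']
    exact ⟨cofactor_ne_one hM hspec hx.1 hx.2 hxx' hYn hYm hH',
      hmap_mul_cofactors hM hspec hY (hL x' (by simp)) hxx' hYn hH hYm hH'⟩

theorem descList_normalForm (hM : IsLDM M) (hspec : ∀ a, IsMaxHC a (hmap a)) (Y H' : ℕ → M)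
    (L : List M) (hL : ∀ x ∈ L, IsHypercube x ∧ x ≠ 1)
    (hchain : L.IsChain (fun a b => hmap (a * b) = b)) (hY : IsHypercube (Y L.length))
    (hrec : IsCarrySeq hmap L Y H') :
    (∀ x ∈ descList H' (Y 0) L.length, IsHypercube x) ∧
      (∀ x ∈ (descList H' (Y 0) L.length).tail, x ≠ 1) ∧
      (descList H' (Y 0) L.length).IsChain (fun a b => hmap (a * b) = b) ∧
      (descList H' (Y 0) L.length).prod = Y L.length * L.prod := by
  induction L with
  | nil => simpa [descList_zero] using hY
  | cons x L ih =>
    obtain ⟨hYn, hH⟩ : Y L.length = hmap (Y (L.length + 1) * x) ∧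
        Y (L.length + 1) * x = H' (L.length + 1) * Y L.length := by
      simpa using hrec (L.length + 1) (by omega) (by simp)
    have hrec' : IsCarrySeq hmap L Y H' :=
      fun i h1 h2 => by
        simpa [List.getElem_cons, show L.length + 1 - i ≠ 0 by omega,
          show L.length + 1 - i - 1 = L.length - i by omega] using hrec i h1 (by simp; omega)
    have hx := hL x List.mem_cons_self
    obtain ⟨ihyp, ine, ichain, iprod⟩ := ih (fun y hy => hL y (List.mem_cons_of_mem _ hy))
      hchain.tail (hYn ▸ (hspec _).1) hrec'
    have hhead := head_descList hM hspec Y H' hx (fun y hy => (hL y (by simp [hy])).1) hchain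
      hY hYn hH hrec'
    rw [List.length_cons, descList_succ]
    refine ⟨?_, ?_, List.isChain_cons.2 ⟨fun b hb => (hhead b hb).2, ichain⟩, ?_⟩
    · simpa [isHypercube_cofactor hM hspec hY hx.1 (hYn ▸ hH)] using ihyp
    · rw [List.tail_cons]
      rcases hK : descList H' (Y 0) L.length with _ | ⟨b, K⟩
      · simp
      · rw [hK] at hhead ine
        exact List.forall_mem_cons.2 ⟨(hhead b rfl).1, ine⟩
    · rw [List.prod_cons, iprod, ← mul_assoc, ← hH, mul_assoc, List.prod_cons]

end DescListNormalForm

/-- Proposition 24(i): the right normal form of `y * a` from that of `a`,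
via `y_m = y`, `y_{i-1} = h(y_i h_i)` and `y_i h_i = h'_i y_{i-1}`. -/
theorem stmt_11 {M : Type*} [Monoid M] [DecidableEq M] (hM : IsLDM M)
    (hmap : M → M) (hspec : ∀ a : M, IsMaxHC a (hmap a))
    (L : List M) (hrnf : IsRNF hmap L) (a : M) (ha : a = L.prod)
    (y : M) (hy : IsHypercube y) :
    ∀ Y H' : ℕ → M, Y L.length = y →
      (∀ i (h1 : 1 ≤ i) (h2 : i ≤ L.length),
        Y (i - 1) = hmap (Y i * L.get ⟨L.length - i, by omega⟩) ∧
        Y i * L.get ⟨L.length - i, by omega⟩ = H' i * Y (i - 1)) →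
      (∀ i, 1 ≤ i → i ≤ L.length → IsHypercube (H' i)) ∧ IsHypercube (Y 0) ∧
      IsRNF hmap
        (((List.ofFn fun j : Fin L.length => H' (L.length - (j : ℕ))) ++ [Y 0]).filter
          (fun x => decide (x ≠ 1))) ∧
      ((((List.ofFn fun j : Fin L.length => H' (L.length - (j : ℕ))) ++ [Y 0]).filter
          (fun x => decide (x ≠ 1))).prod = y * a) := by
  intro Y H' hYL hrec
  obtain ⟨hL, hchain⟩ := (isRNF_iff hM hspec).1 hrnf
  obtain ⟨hhyp, hne, hK, hprod⟩ := descList_normalForm hM hspec Y H' L hL hchain (hYL ▸ hy)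
    hrec
  obtain ⟨hnf, hfprod⟩ := isRNF_filter_ne_one hM hspec hhyp hne hK
  refine ⟨fun i h1 h2 => hhyp _ (mem_descList H' (Y 0) h1 h2),
    hhyp _ (self_mem_descList H' (Y 0) _), hnf, ?_⟩
  refine hfprod.trans ?_
  rw [hprod, hYL, ha]
end

section
/- Let M be a left divisibility monoid with hypercube alphabet H. For any a, b in M with b = ya for some hypercube y, and any t > 0, the length-t suffixes of the right normal forms of a and b (as words over H) differ by left multiplication by a word of length < 2 over H: d_H(a_[t], b_[t]) < 2, where d_H is the left directed distance. -/
section IsAtomisticIcc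
variable {α : Type*}

def IsAtomisticIcc [Preorder α] (p q : α) : Prop :=
  ∀ x y, p ≤ x → x ≤ q → p ≤ y → y ≤ q → (∀ a, p ⋖ a → a ≤ x → a ≤ y) → x ≤ y

theorem IsAtomisticIcc.mono_right [Preorder α] {p q q' : α} (h : IsAtomisticIcc p q)
    (hq : q' ≤ q) : IsAtomisticIcc p q' :=
  fun x y hpx hxq hpy hyq H => h x y hpx (hxq.trans hq) hpy (hyq.trans hq) H

variable [DistribLattice α]

theorem IsAtomisticIcc.mono_left {p p' q : α} (h : IsAtomisticIcc p q) (hp : p ≤ p') :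
    IsAtomisticIcc p' q := by
  intro x y hpx hxq hpy hyq H
  refine h x y (hp.trans hpx) hxq (hp.trans hpy) hyq fun a hpa hax => ?_
  rcases hpa.eq_or_eq (le_inf hpa.le hp) inf_le_left with hinf | hinf
  · have hcov : p' ⋖ a ⊔ p' := covBy_sup_of_inf_covBy_left (hinf ▸ hpa)
    exact le_sup_left.trans (H _ hcov (sup_le hax hpx))
  · exact (inf_eq_left.mp hinf).trans hpy

theorem IsAtomisticIcc.sup_of_inf {a b : α} (h : IsAtomisticIcc (a ⊓ b) a) :
    IsAtomisticIcc b (a ⊔ b) := by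
  intro x y hbx hxq hby _ H
  have hxa : x ⊓ a ≤ y ⊓ a := by
    refine h _ _ (le_inf (inf_le_right.trans hbx) inf_le_left) inf_le_right
      (le_inf (inf_le_right.trans hby) inf_le_left) inf_le_right fun c hc hcx => ?_
    have hca : c ≤ a := hcx.trans inf_le_right
    have hcb : c ⊓ b = a ⊓ b := le_antisymm (inf_le_inf_right b hca) (le_inf hc.le inf_le_right)
    have hcov : b ⋖ c ⊔ b := covBy_sup_of_inf_covBy_left (hcb ▸ hc)
    exact le_inf (le_sup_left.trans (H _ hcov (sup_le (hcx.trans inf_le_left) hbx))) hca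
  calc x = x ⊓ a ⊔ b := ((inf_sup_assoc_of_le a hbx).trans (inf_eq_left.mpr hxq)).symm
    _ ≤ y ⊓ a ⊔ b := sup_le_sup_right hxa b
    _ ≤ y := sup_le inf_le_left hby

theorem IsAtomisticIcc.inf_of_sup {a b : α} (h : IsAtomisticIcc b (a ⊔ b)) :
    IsAtomisticIcc (a ⊓ b) a := by
  have hrestore : ∀ {x}, a ⊓ b ≤ x → x ≤ a → (x ⊔ b) ⊓ a = x := fun hx hxa =>
    (sup_inf_assoc_of_le b hxa).trans (sup_eq_left.mpr (inf_comm a b ▸ hx))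
  intro x y hx hxa hy hya H
  have hxb : x ⊔ b ≤ y ⊔ b := by
    refine h _ _ le_sup_right (sup_le_sup_right hxa b) le_sup_right (sup_le_sup_right hya b)
      fun c hc hcx => ?_
    have hc' : c ⊓ a ⊔ b = c :=
      (inf_sup_assoc_of_le a hc.le).trans (inf_eq_left.mpr (hcx.trans (sup_le_sup_right hxa b)))
    have hcab : c ⊓ a ⊓ b = a ⊓ b := le_antisymm (inf_le_inf_right b inf_le_right)
      (le_inf (le_inf (inf_le_right.trans hc.le) inf_le_left) inf_le_right)
    have hcov : a ⊓ b ⋖ c ⊓ a := hcab ▸ inf_covBy_of_covBy_sup_right (hc'.symm ▸ hc)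
    have hcx' : c ⊓ a ≤ x := (inf_le_inf_right a hcx).trans_eq (hrestore hx hxa)
    exact hc' ▸ sup_le_sup_right (H _ hcov hcx') b
  calc x = (x ⊔ b) ⊓ a := (hrestore hx hxa).symm
    _ ≤ (y ⊔ b) ⊓ a := inf_le_inf_right a hxb
    _ = y := hrestore hy hya

theorem isAtomisticIcc_bot_finset_sup [OrderBot α] {s : Finset α} (hs : ∀ a ∈ s, IsAtom a) :
    IsAtomisticIcc ⊥ (s.sup id) := by
  intro x y _ hx _ _ H
  rw [← inf_eq_left.mpr hx, Finset.sup_inf_distrib_left]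
  refine Finset.sup_le fun a ha => ?_
  rcases (hs a ha).le_iff.mp (inf_le_right : x ⊓ id a ≤ a) with h | h
  · exact h ▸ bot_le
  · exact h.le.trans (H a (bot_covBy_iff.mpr (hs a ha)) (h.ge.trans inf_le_left))

end IsAtomisticIcc

-- `LDvd a b` unfolds to `a ∣ b`, in which the lemmas below are stated.
section Hypercubes
variable {M : Type*} [Monoid M]

theorem IsIrred.eq_one_or_eq_of_dvd {ι w : M} (hι : IsIrred ι) (h : w ∣ ι) : w = 1 ∨ w = ι := by
  obtain ⟨c, hc⟩ := h
  rcases hι.2 w c hc with h1 | h1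
  · exact Or.inl h1
  · rw [hc, h1, mul_one]; exact Or.inr rfl

def HypercubeLengthLE (t : ℕ) (d : M) : Prop :=
  ∃ ws : List M, (∀ x ∈ ws, IsHypercube x) ∧ ws.prod = d ∧ ws.length ≤ t

theorem HypercubeLengthLE.exists_eq_mul {t : ℕ} {d : M} (hd : HypercubeLengthLE (t + 1) d) :
    ∃ e d₀, IsHypercube e ∧ HypercubeLengthLE t d₀ ∧ d = e * d₀ := by
  obtain ⟨ws, hws, rfl, hlen⟩ := hd
  cases ws with
  | nil => exact ⟨1, 1, isHypercube_one, ⟨[], by simp⟩, by simp⟩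
  | cons e ws =>
    refine ⟨e, ws.prod, hws e List.mem_cons_self, ⟨ws, fun x hx => hws x (.tail e hx), rfl, ?_⟩,
      rfl⟩
    simpa using hlen

theorem hypercubeLengthLE_prod_drop {L : List M} (hL : ∀ x ∈ L, IsHypercube x) (t : ℕ) :
    HypercubeLengthLE t (L.drop (L.length - t)).prod :=
  ⟨_, fun x hx => hL x (List.mem_of_mem_drop hx), rfl, by rw [List.length_drop]; omega⟩

end Hypercubes

namespace IsLDM
variable {M : Type*} [Monoid M] (hM : IsLDM M)
include hM

theorem mul_left_cancel_s14 {a b c : M} (h : a * b = a * c) : b = c := hM.1 a b c h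

theorem mul_right_cancel_s14 {a b c : M} (h : b * a = c * a) : b = c := hM.2.1 a b c h

theorem dvd_of_mul_dvd_mul_left {a b c : M} (h : a * b ∣ a * c) : b ∣ c := by
  obtain ⟨d, hd⟩ := h
  exact ⟨d, hM.mul_left_cancel_s14 (hd.trans (mul_assoc a b d))⟩

/-- The left gcd reduces the lcm property of `h` to a test among the left divisors of `h`. -/
theorem isHypercube_of_forall_dvd {h : M}
    (H : ∀ d, d ∣ h → (∀ ι, IsIrred ι → ι ∣ h → ι ∣ d) → h ∣ d) : IsHypercube h := by
  have hfin : {ι : M | IsIrred ι ∧ ι ∣ h}.Finite := (hM.2.2.2.2.1 h).subset fun ι hι => hι.2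
  refine ⟨hfin.toFinset, fun ι hι => (hfin.mem_toFinset.mp hι).1,
    fun ι hι => (hfin.mem_toFinset.mp hι).2, fun m hm => ?_⟩
  obtain ⟨g, hgh, hgm, hg⟩ := hM.2.2.2.1 h m
  refine dvd_trans (H g hgh fun ι hι hιh => hg ι hιh ?_) hgm
  exact hm ι (hfin.mem_toFinset.mpr ⟨hι, hιh⟩)

/-- Indexed by `hM` so that the divisor lattice postulated by `IsLDM` can be an instance. -/
def Divisors (_ : IsLDM M) (V : M) : Type _ := {b : M // b ∣ V}

noncomputable instance (V : M) : DistribLattice (hM.Divisors V) := (hM.2.2.2.2.2 V).choose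

namespace Divisors
variable {hM} {V : M}

theorem le_iff {x y : hM.Divisors V} : x ≤ y ↔ x.1 ∣ y.1 := (hM.2.2.2.2.2 V).choose_spec x y

instance : BoundedOrder (hM.Divisors V) where
  bot := ⟨1, one_dvd V⟩
  bot_le x := le_iff.2 (one_dvd x.1)
  top := ⟨V, dvd_rfl⟩
  le_top x := le_iff.2 x.2

theorem exists_eq_mul_of_le_of_le {p x q : hM.Divisors V} {h : M} (hq : q.1 = p.1 * h)
    (hpx : p ≤ x) (hxq : x ≤ q) : ∃ w, x.1 = p.1 * w ∧ w ∣ h := by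
  obtain ⟨w, hw⟩ := le_iff.1 hpx
  refine ⟨w, hw, hM.dvd_of_mul_dvd_mul_left (a := p.1) ?_⟩
  rw [← hw, ← hq]
  exact le_iff.1 hxq

theorem covBy_iff_isIrred {p a : hM.Divisors V} {ι : M} (ha : a.1 = p.1 * ι) :
    p ⋖ a ↔ IsIrred ι := by
  have hpa : p ≤ a := le_iff.2 ⟨ι, ha⟩
  constructor
  · intro hcov
    refine ⟨fun h1 => hcov.ne (Subtype.ext (by rw [ha, h1, mul_one])), fun b c hbc => ?_⟩
    have hpba : p.1 * b * c = a.1 := by rw [ha, hbc, mul_assoc]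
    let pb : hM.Divisors V := ⟨p.1 * b, dvd_trans ⟨c, hpba.symm⟩ a.2⟩
    rcases hcov.eq_or_eq (le_iff.2 ⟨b, rfl⟩ : p ≤ pb) (le_iff.2 ⟨c, hpba.symm⟩) with h | h
    · exact Or.inl (hM.mul_left_cancel_s14 ((congrArg Subtype.val h).trans (mul_one p.1).symm))
    · refine Or.inr (hM.mul_left_cancel_s14 (a := p.1 * b) ?_)
      rw [hpba, mul_one]
      exact (congrArg Subtype.val h).symm
  · intro hι
    refine covBy_iff_lt_and_eq_or_eq.2 ⟨lt_of_le_of_ne hpa fun hpa' => hι.1 ?_, fun c hpc hca => ?_⟩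
    · exact hM.mul_left_cancel_s14 (a := p.1) (by rw [← ha, ← hpa', mul_one])
    obtain ⟨w, hw, hwι⟩ := exists_eq_mul_of_le_of_le ha hpc hca
    rcases hι.eq_one_or_eq_of_dvd hwι with rfl | rfl
    · exact Or.inl (Subtype.ext (by rw [hw, mul_one]))
    · exact Or.inr (Subtype.ext (by rw [hw, ha]))

end Divisors

open Divisors

theorem isAtomisticIcc_of_isHypercube {h : M} (hh : IsHypercube h) :
    IsAtomisticIcc (⊥ : hM.Divisors h) ⊤ := by
  classical
  obtain ⟨s, hs_irr, hs_dvd, hs_lcm⟩ := hh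
  let f : M → hM.Divisors h := fun ι => if hι : ι ∣ h then ⟨ι, hι⟩ else ⊥
  have hf : ∀ ι ∈ s, (f ι).1 = ι := fun ι hι => by simp [f, show ι ∣ h from hs_dvd ι hι]
  have htop : (s.image f).sup id = ⊤ := by
    refine top_le_iff.1 (le_iff.2 (hs_lcm _ fun ι hι => ?_))
    rw [← hf ι hι]
    exact le_iff.1 (Finset.le_sup (f := id) (Finset.mem_image_of_mem f hι))
  refine htop ▸ isAtomisticIcc_bot_finset_sup fun a ha => ?_
  obtain ⟨ι, hι, rfl⟩ := Finset.mem_image.1 ha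
  refine bot_covBy_iff.1 ((covBy_iff_isIrred ?_).2 (hs_irr ι hι))
  rw [hf ι hι]
  exact (one_mul ι).symm

theorem isHypercube_iff_isAtomisticIcc {V : M} {p q : hM.Divisors V} {h : M}
    (hq : q.1 = p.1 * h) : IsHypercube h ↔ IsAtomisticIcc p q := by
  constructor
  · intro hh x y hpx hxq hpy hyq H
    obtain ⟨x', hx, hx'h⟩ := exists_eq_mul_of_le_of_le hq hpx hxq
    obtain ⟨y', hy, hy'h⟩ := exists_eq_mul_of_le_of_le hq hpy hyq
    let X : hM.Divisors h := ⟨x', hx'h⟩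
    let Y : hM.Divisors h := ⟨y', hy'h⟩
    have hxy : X ≤ Y := by
      refine isAtomisticIcc_of_isHypercube hM hh _ _ bot_le le_top bot_le le_top fun a ha hax => ?_
      have hι : IsIrred a.1 := (covBy_iff_isIrred (one_mul a.1).symm).1 ha
      have hpax : p.1 * a.1 ∣ x.1 := hx ▸ mul_dvd_mul_left p.1 (le_iff.1 hax)
      let pa : hM.Divisors V := ⟨p.1 * a.1, dvd_trans hpax x.2⟩
      have hpa : pa ≤ y := H pa ((covBy_iff_isIrred rfl).2 hι) (le_iff.2 hpax)
      exact le_iff.2 (hM.dvd_of_mul_dvd_mul_left (hy ▸ le_iff.1 hpa))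
    exact le_iff.2 (hx ▸ hy ▸ mul_dvd_mul_left p.1 (le_iff.1 hxy : x' ∣ y'))
  · intro hpq
    refine hM.isHypercube_of_forall_dvd fun d hdh H => ?_
    have hpd : p.1 * d ∣ q.1 := hq ▸ mul_dvd_mul_left p.1 hdh
    let pd : hM.Divisors V := ⟨p.1 * d, dvd_trans hpd q.2⟩
    have hqpd : q ≤ pd := by
      refine hpq q pd (le_iff.2 ⟨h, hq⟩) le_rfl (le_iff.2 ⟨d, rfl⟩) (le_iff.2 hpd)
        fun a ha haq => ?_
      obtain ⟨ι, hι, hιh⟩ := exists_eq_mul_of_le_of_le hq ha.le haq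
      exact le_iff.2 (hι ▸ mul_dvd_mul_left p.1 (H ι ((covBy_iff_isIrred hι).1 ha) hιh))
    exact hM.dvd_of_mul_dvd_mul_left (hq ▸ le_iff.1 hqpd)

theorem isHypercube_of_sup_eq_mul {V : M} {P Y : hM.Divisors V} (hY : IsHypercube Y.1)
    {τ : M} (hτ : (P ⊔ Y).1 = P.1 * τ) : IsHypercube τ := by
  have hY' : IsAtomisticIcc ⊥ Y :=
    (hM.isHypercube_iff_isAtomisticIcc (p := ⊥) (one_mul Y.1).symm).1 hY
  have hPY : IsAtomisticIcc P (Y ⊔ P) := (hY'.mono_left bot_le).sup_of_inf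
  exact (hM.isHypercube_iff_isAtomisticIcc hτ).2 (sup_comm P Y ▸ hPY)

theorem isHypercube_of_inf_eq_mul {V e : M} {X A : hM.Divisors V} (he : IsHypercube e)
    (hX : V = X.1 * e) {A₁ : M} (hA : A.1 = (X ⊓ A).1 * A₁) : IsHypercube A₁ := by
  have hX' : IsAtomisticIcc X ⊤ := (hM.isHypercube_iff_isAtomisticIcc (q := ⊤) hX).1 he
  have hAX : IsAtomisticIcc (A ⊓ X) A := (hX'.mono_right le_top).inf_of_sup
  exact (hM.isHypercube_iff_isAtomisticIcc hA).2 (inf_comm A X ▸ hAX)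

theorem right_eq_one_of_mul_eq_one {a b : M} (h : a * b = 1) : b = 1 := by
  let A : hM.Divisors 1 := ⟨a, ⟨b, h.symm⟩⟩
  have ha : a = 1 := congrArg Subtype.val (le_bot_iff.1 (le_iff.2 A.2) : A = ⊥)
  rwa [ha, one_mul] at h

theorem hypercubeLengthLE_of_mul {t : ℕ} {D d : M} (h : HypercubeLengthLE t (D * d)) :
    HypercubeLengthLE t d := by
  obtain ⟨ws, hws, hprod, hlen⟩ := h
  induction ws generalizing t D d with
  | nil => exact ⟨[], by simp, (hM.right_eq_one_of_mul_eq_one hprod.symm).symm, by simp⟩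
  | cons e ws ih =>
    rw [List.prod_cons] at hprod
    let P : hM.Divisors (D * d) := ⟨D, ⟨d, rfl⟩⟩
    let E : hM.Divisors (D * d) := ⟨e, ⟨ws.prod, hprod.symm⟩⟩
    obtain ⟨τ, hτ⟩ := le_iff.1 (le_sup_left : P ≤ P ⊔ E)
    obtain ⟨d₂, hd₂⟩ := (P ⊔ E).2
    obtain ⟨P₃, hP₃⟩ := le_iff.1 (le_sup_right : E ≤ P ⊔ E)
    have hd : d = τ * d₂ := hM.mul_left_cancel_s14 (by rw [← mul_assoc, ← hτ, ← hd₂])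
    have hwsprod : ws.prod = P₃ * d₂ :=
      hM.mul_left_cancel_s14 (a := e) (by rw [hprod, ← mul_assoc, ← hP₃, ← hd₂])
    obtain ⟨vs, hvs, hvsprod, hvslen⟩ :=
      ih (t := t - 1) (fun x hx => hws x (.tail e hx)) hwsprod (by simp at hlen; omega)
    refine ⟨τ :: vs, ?_, by rw [List.prod_cons, hvsprod, hd],
      by simp only [List.length_cons] at hlen ⊢; omega⟩
    exact List.forall_mem_cons.2 ⟨hM.isHypercube_of_sup_eq_mul (P := P) (Y := E)
      (hws e List.mem_cons_self) hτ, hvs⟩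

theorem rdvd_mul_of_isMaxHC {A h e d₀ S : M} (hA : IsMaxHC A h) (he : IsHypercube e)
    (hS : RDvd d₀ S) (hm : RDvd (e * d₀) (A * S)) : RDvd (e * d₀) (h * S) := by
  obtain ⟨d₁, rfl⟩ := hS
  obtain ⟨C, hC⟩ := hm
  have hV : A * d₁ = C * e := hM.mul_right_cancel_s14 (a := d₀) (by simp only [mul_assoc]; exact hC)
  let X : hM.Divisors (A * d₁) := ⟨C, ⟨e, hV⟩⟩
  let A' : hM.Divisors (A * d₁) := ⟨A, ⟨d₁, rfl⟩⟩
  obtain ⟨A₁, hA₁⟩ := le_iff.1 (inf_le_right : X ⊓ A' ≤ A')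
  obtain ⟨c₁, hc₁⟩ := le_iff.1 (inf_le_left : X ⊓ A' ≤ X)
  have hA₁e : IsHypercube A₁ := hM.isHypercube_of_inf_eq_mul he hV hA₁
  have hA₁c₁ : A₁ * d₁ = c₁ * e := hM.mul_left_cancel_s14 (a := (X ⊓ A').1) <| by
    rw [← mul_assoc, ← mul_assoc, ← hA₁, ← hc₁]
    exact hV
  obtain ⟨κ, rfl⟩ := hA.2.2 A₁ hA₁e ⟨_, hA₁⟩
  exact ⟨κ * c₁, by simp only [mul_assoc, ← mul_assoc A₁, hA₁c₁]⟩

theorem rdvd_prod_drop {hmap : M → M} (hspec : ∀ a : M, IsMaxHC a (hmap a)) {L : List M}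
    (hL : IsRNF hmap L) {d : M} (hd : RDvd d L.prod) (t : ℕ) (ht : HypercubeLengthLE t d) :
    RDvd d (L.drop (L.length - t)).prod := by
  induction t generalizing d with
  | zero =>
    obtain ⟨ws, -, rfl, hlen⟩ := ht
    rw [List.length_eq_zero_iff.1 (Nat.le_zero.1 hlen)]
    exact ⟨1, by simp⟩
  | succ t ih =>
    obtain ⟨e, d₀, he, hd₀, rfl⟩ := ht.exists_eq_mul
    have hS := ih (by obtain ⟨C, hC⟩ := hd; exact ⟨C * e, by rw [hC, mul_assoc]⟩) hd₀
    by_cases hlt : t < L.length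
    · obtain ⟨n, hn⟩ : ∃ n, L.length - t = n + 1 := ⟨L.length - (t + 1), by omega⟩
      have hnL : n < L.length := by omega
      rw [show L.length - (t + 1) = n by omega, List.drop_eq_getElem_cons hnL, List.prod_cons]
      rw [hn] at hS
      have hmax : IsMaxHC (L.take (n + 1)).prod L[n] := by
        simpa only [hL.2 n hnL, List.get_eq_getElem] using hspec (L.take (n + 1)).prod
      exact hM.rdvd_mul_of_isMaxHC hmax he hS (List.prod_take_mul_prod_drop L (n + 1) ▸ hd)
    · rwa [show L.length - (t + 1) = 0 by omega, List.drop_zero]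

end IsLDM

open IsLDM.Divisors in
theorem stmt_14_general {M : Type*} [Monoid M] (hM : IsLDM M)
    (hmap : M → M) (hspec : ∀ a : M, IsMaxHC a (hmap a))
    {a b y : M} (hy : IsHypercube y) (hb : b = y * a)
    {La Lb : List M} (hLa : IsRNF hmap La ∧ La.prod = a)
    (hLb : IsRNF hmap Lb ∧ Lb.prod = b) (t : ℕ) :
    ∃ w : List M, (∀ x ∈ w, IsHypercube x) ∧ w.length < 2 ∧
      (w.prod * (La.drop (La.length - t)).prod = (Lb.drop (Lb.length - t)).prod ∨
       (La.drop (La.length - t)).prod = w.prod * (Lb.drop (Lb.length - t)).prod) := by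
  obtain ⟨hLa, rfl⟩ := hLa
  obtain ⟨hLb, rfl⟩ := hLb
  have hSa := hypercubeLengthLE_prod_drop (fun x hx => (hLa.1 x hx).1) t
  have hSb := hypercubeLengthLE_prod_drop (fun x hx => (hLb.1 x hx).1) t
  set Sa := (La.drop (La.length - t)).prod
  set Sb := (Lb.drop (Lb.length - t)).prod
  obtain ⟨A, hA⟩ : ∃ A, La.prod = A * Sa := ⟨_, (List.prod_take_mul_prod_drop La _).symm⟩
  obtain ⟨B, hB⟩ : ∃ B, Lb.prod = B * Sb := ⟨_, (List.prod_take_mul_prod_drop Lb _).symm⟩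
  have hbSa : Lb.prod = y * A * Sa := by rw [hb, hA, mul_assoc]
  obtain ⟨z, hz⟩ : RDvd Sa Sb := hM.rdvd_prod_drop hspec hLb ⟨_, hbSa⟩ t hSa
  have hBz : y * A = B * z := hM.mul_right_cancel_s14 (a := Sa) (by rw [← hbSa, hB, hz, mul_assoc])
  let Y : hM.Divisors Lb.prod := ⟨y, ⟨La.prod, hb⟩⟩
  let B' : hM.Divisors Lb.prod := ⟨B, ⟨Sb, hB⟩⟩
  let W : hM.Divisors Lb.prod := ⟨y * A, ⟨Sa, hbSa⟩⟩
  obtain ⟨τ, hτ⟩ : B ∣ (B' ⊔ Y).1 := le_iff.1 le_sup_left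
  obtain ⟨r, hr⟩ : y ∣ (B' ⊔ Y).1 := le_iff.1 le_sup_right
  obtain ⟨ν, hν⟩ := (B' ⊔ Y).2
  have hSbν : Sb = τ * ν := hM.mul_left_cancel_s14 (a := B) (by rw [← hB, hν, hτ, mul_assoc])
  have hνa : RDvd ν La.prod := ⟨r, hM.mul_left_cancel_s14 (a := y) (by rw [← hb, hν, hr, mul_assoc])⟩
  obtain ⟨s, hs⟩ : RDvd ν Sa :=
    hM.rdvd_prod_drop hspec hLa hνa t (hM.hypercubeLengthLE_of_mul (hSbν ▸ hSb))
  have hWs : (B' ⊔ Y).1 = y * A * s :=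
    hM.mul_right_cancel_s14 (a := ν) (by rw [← hν, hbSa, hs, ← mul_assoc])
  have hJW : B' ⊔ Y = W :=
    le_antisymm (sup_le (le_iff.2 ⟨z, hBz⟩) (le_iff.2 ⟨A, rfl⟩)) (le_iff.2 ⟨s, hWs⟩)
  refine ⟨[τ], by simpa using hM.isHypercube_of_sup_eq_mul hy hτ, by simp, Or.inl ?_⟩
  refine hM.mul_left_cancel_s14 (a := B) ?_
  rw [List.prod_singleton, ← mul_assoc, ← hτ, hJW, ← hB]
  exact hbSa.symm

/-- Left directed fellow traveller property with constant 2: suffixes of the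
right normal forms of `a` and `y * a` stay at left directed distance < 2. -/
theorem stmt_14 {M : Type*} [Monoid M] (hM : IsLDM M)
    (hmap : M → M) (hspec : ∀ a : M, IsMaxHC a (hmap a))
    {a b y : M} (hy : IsHypercube y) (hb : b = y * a)
    {La Lb : List M} (hLa : IsRNF hmap La ∧ La.prod = a)
    (hLb : IsRNF hmap Lb ∧ Lb.prod = b) (t : ℕ) (ht : 0 < t) :
    ∃ w : List M, (∀ x ∈ w, IsHypercube x) ∧ w.length < 2 ∧
      (w.prod * (La.drop (La.length - t)).prod = (Lb.drop (Lb.length - t)).prod ∨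
       (La.drop (La.length - t)).prod = w.prod * (Lb.drop (Lb.length - t)).prod) :=
  stmt_14_general hM hmap hspec hy hb hLa hLb t
end
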